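/- arXiv:math/0402060 — 4 statements merged into one kernel-verified Lean document; each statement's English description precedes it below -/
import Mathlib

section
/- Let F_n be the free group on generators y_0, …, y_{n−1} (n ≥ 2) and let φ be the automorphism defined by φ(y_0) = y_0 y_1 ⋯ y_{n−2} y_{n−1} y_{n−2}⁻¹ ⋯ y_1⁻¹ y_0⁻¹ and φ(y_i) = y_{i−1} for 1 ≤ i ≤ n−1. Then φ^n is the inner automorphism f ↦ Δ f Δ⁻¹ where Δ = y_0 y_1 ⋯ y_{n−1}; in particular φ^n(y_i) = Δ y_i Δ⁻¹ for all i. -/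
/-- The product `y_0 y_1 ⋯ y_{n-2}` in the free group on `n` generators. -/
def prefixProd (n : ℕ) : FreeGroup (Fin n) :=
  ((List.finRange (n - 1)).map (fun j => FreeGroup.of (Fin.castLE (Nat.sub_le n 1) j))).prod

/-- The product `Δ = y_0 y_1 ⋯ y_{n-1}` in the free group on `n` generators. -/
def DeltaProd (n : ℕ) : FreeGroup (Fin n) :=
  ((List.finRange n).map FreeGroup.of).prod

theorem stmt_4 (n : ℕ) (hn : 2 ≤ n) (φ : MulAut (FreeGroup (Fin n)))
    (h0 : φ (FreeGroup.of ⟨0, by omega⟩) =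
      prefixProd n * FreeGroup.of ⟨n - 1, by omega⟩ * (prefixProd n)⁻¹)
    (hi : ∀ i : Fin n, 0 < (i : ℕ) →
      φ (FreeGroup.of i) =
        FreeGroup.of ⟨(i : ℕ) - 1, lt_of_le_of_lt (Nat.sub_le _ _) i.isLt⟩) :
    (∀ f : FreeGroup (Fin n), (φ ^ n) f = DeltaProd n * f * (DeltaProd n)⁻¹) ∧
    (∀ i : Fin n, (φ ^ n) (FreeGroup.of i) =
      DeltaProd n * FreeGroup.of i * (DeltaProd n)⁻¹) := by
  obtain ⟨m, rfl⟩ : ∃ m, n = m + 1 := ⟨n - 1, by omega⟩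
  have hP : prefixProd (m+1)
      = ((List.finRange m).map (fun j => FreeGroup.of (⟨j.val, by omega⟩ : Fin (m+1)))).prod :=
    rfl
  have h0'' : φ (FreeGroup.of (⟨0, by omega⟩ : Fin (m+1)))
      = prefixProd (m+1) * FreeGroup.of (⟨m, by omega⟩ : Fin (m+1)) * (prefixProd (m+1))⁻¹ := h0
  -- Δ = P * y_m
  have hsplit : DeltaProd (m+1)
      = prefixProd (m+1) * FreeGroup.of (⟨m, by omega⟩ : Fin (m+1)) := by
    have hlist : (List.finRange (m+1)).map FreeGroup.of
        = ((List.finRange m).map (fun j => FreeGroup.of (⟨j.val, by omega⟩ : Fin (m+1))))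
          ++ [FreeGroup.of (⟨m, by omega⟩ : Fin (m+1))] := by
      rw [List.finRange_succ_last, List.map_append, List.map_map]
      rfl
    rw [DeltaProd, hlist, List.prod_append, hP]
    simp
  -- φ fixes Δ
  have hfix : φ (DeltaProd (m+1)) = DeltaProd (m+1) := by
    have hhead : (List.finRange (m+1)).map FreeGroup.of
        = FreeGroup.of (⟨0, by omega⟩ : Fin (m+1))
          :: (List.finRange m).map (FreeGroup.of ∘ Fin.succ) := by
      rw [List.finRange_succ, List.map_cons, List.map_map]
      congr 1
    have htail : ((List.finRange m).map (FreeGroup.of ∘ Fin.succ)).map φ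
        = (List.finRange m).map (fun j => FreeGroup.of (⟨j.val, by omega⟩ : Fin (m+1))) := by
      rw [List.map_map]
      apply List.map_congr_left
      intro j _
      simp only [Function.comp_apply]
      rw [hi j.succ (by simp [Fin.succ])]
      rfl
    conv_lhs => rw [DeltaProd, hhead]
    rw [List.prod_cons, map_mul, map_list_prod, htail, ← hP, h0'', hsplit]
    group
  -- φ^k fixes Δ
  have hfixk : ∀ k : ℕ, (φ ^ k) (DeltaProd (m+1)) = DeltaProd (m+1) := by
    intro k
    induction k with
    | zero => simp
    | succ k ih => rw [pow_succ, MulAut.mul_apply, hfix, ih]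
  -- φ(y_0) = Δ y_m Δ⁻¹
  have h0' : φ (FreeGroup.of (⟨0, by omega⟩ : Fin (m+1)))
      = DeltaProd (m+1) * FreeGroup.of (⟨m, by omega⟩ : Fin (m+1)) * (DeltaProd (m+1))⁻¹ := by
    rw [h0'', hsplit]
    group
  -- shift lemma on generators
  have hS : ∀ k j (h : j + k < m + 1),
      (φ ^ k) (FreeGroup.of (⟨j + k, h⟩ : Fin (m+1))) = FreeGroup.of ⟨j, by omega⟩ := by
    intro k
    induction k with
    | zero => intro j h; simp
    | succ k ih =>
      intro j h
      rw [pow_succ, MulAut.mul_apply,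
        hi ⟨j + (k + 1), h⟩ (Nat.succ_pos _)]
      exact ih j (by omega)
  -- per-generator result
  have hgen : ∀ i : Fin (m+1), (φ ^ (m+1)) (FreeGroup.of i)
      = DeltaProd (m+1) * FreeGroup.of i * (DeltaProd (m+1))⁻¹ := by
    intro i
    have hdec : φ ^ (m+1) = (φ ^ (m - i.val)) * (φ * φ ^ (i.val)) := by
      rw [← pow_succ', ← pow_add]
      congr 1
      omega
    rw [hdec, MulAut.mul_apply, MulAut.mul_apply]
    have hi0 : FreeGroup.of i = FreeGroup.of (⟨0 + i.val, by omega⟩ : Fin (m+1)) := by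
      congr 1
      ext
      simp
    rw [hi0, hS i.val 0 (by omega), h0']
    have hm : FreeGroup.of (⟨m, by omega⟩ : Fin (m+1))
        = FreeGroup.of (⟨i.val + (m - i.val), by omega⟩ : Fin (m+1)) := by
      congr 1
      ext
      simp only [Fin.val_mk]
      omega
    simp only [map_mul, map_inv]
    rw [hfixk, hm, hS (m - i.val) i.val (by omega)]
    rw [hi0]
  refine ⟨?_, hgen⟩
  have hhom : (φ ^ (m+1)).toMonoidHom = ((MulAut.conj (DeltaProd (m+1))).toMonoidHom :
      FreeGroup (Fin (m+1)) →* FreeGroup (Fin (m+1))) := by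
    apply FreeGroup.ext_hom
    intro a
    simpa [MulAut.conj_apply] using hgen a
  intro f
  have := DFunLike.congr_fun hhom f
  simpa [MulAut.conj_apply] using this
end

section
/- Let G = F ⋊_φ ⟨t⟩. If v = t^ℓ V and w = t^ℓ W are conjugate in G by an element u = t^k U (U ∈ F, k ∈ ℤ), and k = mq + r with 0 ≤ r ≤ m−1, where φ^m(f) = Δ⁻¹ f Δ for all f ∈ F, then w is conjugate to t^{−r} v t^r by an element of the subgroup ⟨F, t^m⟩ of G. -/
/-- The semidirect product `F ⋊ ⟨t⟩` in which `t⁻¹ f t = φ f` (so `t` acts by `φ⁻¹`). -/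
abbrev MappingTorus (F : Type*) [Group F] (φ : MulAut F) :=
  SemidirectProduct F (Multiplicative ℤ) (zpowersHom (MulAut F) φ⁻¹)

open SemidirectProduct in
theorem stmt_10 (F : Type*) [Group F] (φ : MulAut F) (m : ℕ) (hm : 1 ≤ m) (Δ : F)
    (hφ : ∀ f : F, (φ ^ m) f = Δ⁻¹ * f * Δ)
    (ℓ k q : ℤ) (r : ℕ) (hr : (r : ℤ) ≤ (m : ℤ) - 1) (hk : k = (m : ℤ) * q + r)
    (V W U : F)
    (hconj :
      ((inr (Multiplicative.ofAdd k) : MappingTorus F φ) * inl U)⁻¹ *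
          (inr (Multiplicative.ofAdd ℓ) * inl V) *
          (inr (Multiplicative.ofAdd k) * inl U) =
        inr (Multiplicative.ofAdd ℓ) * inl W) :
    ∃ h ∈ Subgroup.closure
        ((Set.range fun f : F => (inl f : MappingTorus F φ)) ∪
          {inr (Multiplicative.ofAdd (m : ℤ))}),
      h⁻¹ *
          (inr (Multiplicative.ofAdd (-(r : ℤ))) *
            (inr (Multiplicative.ofAdd ℓ) * inl V) *
            inr (Multiplicative.ofAdd (r : ℤ))) * h =
        inr (Multiplicative.ofAdd ℓ) * inl W := by
  set S : Set (MappingTorus F φ) :=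
    (Set.range fun f : F => (inl f : MappingTorus F φ)) ∪
      {inr (Multiplicative.ofAdd (m : ℤ))} with hS
  refine ⟨inr (Multiplicative.ofAdd (-(r : ℤ))) *
      (inr (Multiplicative.ofAdd k) * inl U), ?_, ?_⟩
  · have h1 : (inl U : MappingTorus F φ) ∈ Subgroup.closure S :=
      Subgroup.subset_closure (Or.inl ⟨U, rfl⟩)
    have h2 : (inr (Multiplicative.ofAdd (m : ℤ)) : MappingTorus F φ) ∈ Subgroup.closure S :=
      Subgroup.subset_closure (Or.inr rfl)
    have h3 : (inr (Multiplicative.ofAdd (-(r : ℤ))) : MappingTorus F φ) *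
        inr (Multiplicative.ofAdd k) =
        (inr (Multiplicative.ofAdd (m : ℤ)) : MappingTorus F φ) ^ q := by
      rw [← map_mul, ← map_zpow]
      congr 1
      apply Multiplicative.toAdd.injective
      simp [hk]
    rw [← mul_assoc, h3]
    exact mul_mem (zpow_mem h2 q) h1
  · have hinv : (inr (Multiplicative.ofAdd (-(r : ℤ))) : MappingTorus F φ) =
        (inr (Multiplicative.ofAdd (r : ℤ)))⁻¹ := by
      simp
    rw [hinv, ← hconj]
    group
end

section
/- Let F be a free group of rank n ≥ 2 and suppose Δ is a cyclically reduced word in F. If a reduced word V satisfies |V| ≤ ‖Δ^{−ε} V Δ^{ε}‖ for ε = ±1 (where ‖·‖ denotes the length of the free reduction), then |V| ≤ ‖Δ^{−k} V Δ^{k}‖ for every integer k. -/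
/-!
Writing `|x y| = |x| + |y|` for "no cancellation in the product `x y`", the point is that
`k ↦ |Δ⁻ᵏ V Δᵏ|` is convex on `ℤ`: for cyclically reduced `Δ` (i.e. `|Δ Δ| = 2 |Δ|`) and every
`W`, `2 |W| ≤ |Δ⁻¹ W Δ| + |Δ W Δ⁻¹|`. A convex function with `f 0 ≤ f 1` and `f 0 ≤ f (-1)` is
minimal at `0`.

For the convexity inequality: since the last letter of `Δ` does not cancel its first letter, the
first letter of `W` cancels against at most one of `Δ⁻¹` and `Δ` on the left, and similarly on
the right. If `Δ⁻¹ W Δ` has no cancellation at all, it has length `|W| + 2|Δ|`, and the triangle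
inequality gives `|Δ W Δ⁻¹| ≥ |W| - 2|Δ|`. Otherwise each conjugate is free of cancellation on
one side, and such a conjugate is at least as long as `W`.
-/

namespace FreeGroup

variable {α : Type*} [DecidableEq α]

theorem IsReduced.exists_reduce_append {A B : List (α × Bool)} (hA : IsReduced A)
    (hB : IsReduced B) :
    ∃ p c s, A = p ++ c ∧ B = invRev c ++ s ∧ reduce (A ++ B) = p ++ s := by
  induction A with
  | nil => exact ⟨[], [], B, rfl, rfl, hB.reduce_eq⟩
  | cons a A ih =>
    obtain ⟨p, c, s, rfl, rfl, hred⟩ := ih hA.tail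
    rw [List.cons_append, reduce.cons, hred]
    rcases p with _ | ⟨b, p⟩
    · rcases s with _ | ⟨b, s⟩
      · exact ⟨[a], c, [], rfl, rfl, rfl⟩
      · by_cases hab : a.1 = b.1 ∧ a.2 = !b.2
        · refine ⟨[], a :: c, s, rfl, ?_, by simp [hab]⟩
          simp_all [invRev]
        · exact ⟨[a], c, b :: s, rfl, rfl, by simp [hab]⟩
    · have hab : ¬(a.1 = b.1 ∧ a.2 = !b.2) := by
        rintro ⟨h₁, h₂⟩
        have := (isReduced_cons_cons.1 hA).1 h₁
        simp_all
      exact ⟨a :: b :: p, c, s, rfl, rfl, by simp [hab]⟩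

theorem exists_toWord_mul (x y : FreeGroup α) :
    ∃ p c s, x.toWord = p ++ c ∧ y.toWord = invRev c ++ s ∧ (x * y).toWord = p ++ s := by
  rw [toWord_mul]
  exact isReduced_toWord.exists_reduce_append isReduced_toWord

theorem norm_mul_eq_add_iff {x y : FreeGroup α} :
    norm (x * y) = norm x + norm y ↔ IsReduced (x.toWord ++ y.toWord) := by
  rw [norm, norm, norm, toWord_mul, ← List.length_append, isReduced_iff_reduce_eq]
  exact ⟨reduce.red.sublist.eq_of_length, fun h => by rw [h]⟩

theorem norm_conj_le (Δ W : FreeGroup α) : norm (Δ⁻¹ * W * Δ) ≤ norm W + 2 * norm Δ :=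
  calc norm (Δ⁻¹ * W * Δ) ≤ norm Δ⁻¹ + norm W + norm Δ :=
        (norm_mul_le _ _).trans (Nat.add_le_add_right (norm_mul_le _ _) _)
    _ = norm W + 2 * norm Δ := by rw [norm_inv_eq]; ring

theorem toWord_mul_of_norm_mul_eq_add {x y : FreeGroup α}
    (h : norm (x * y) = norm x + norm y) : (x * y).toWord = x.toWord ++ y.toWord := by
  rw [toWord_mul, (norm_mul_eq_add_iff.1 h).reduce_eq]

theorem isReduced_toWord_append_iff {x y : FreeGroup α} :
    IsReduced (x.toWord ++ y.toWord) ↔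
      ∀ a ∈ x.toWord.getLast?, ∀ b ∈ y.toWord.head?, a.1 = b.1 → a.2 = b.2 := by
  rw [IsReduced, List.isChain_append]
  exact ⟨fun h => h.2.2, fun h => ⟨isReduced_toWord, isReduced_toWord, h⟩⟩

theorem norm_inv_mul_eq_add_or_norm_mul_eq_add {Δ : FreeGroup α}
    (hΔ : norm (Δ * Δ) = 2 * norm Δ) (W : FreeGroup α) :
    norm (Δ⁻¹ * W) = norm Δ⁻¹ + norm W ∨ norm (Δ * W) = norm Δ + norm W := by
  rw [two_mul, norm_mul_eq_add_iff, isReduced_toWord_append_iff] at hΔ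
  rw [norm_mul_eq_add_iff, norm_mul_eq_add_iff, isReduced_toWord_append_iff,
    isReduced_toWord_append_iff, toWord_inv, invRev, List.getLast?_reverse, List.head?_map]
  by_contra! ⟨⟨x, hx, b, hb, hxb₁, hxb₂⟩, l, hl, b', hb', hlb₁, hlb₂⟩
  rw [Option.mem_def, Option.map_eq_some_iff] at hx
  obtain ⟨d, hd, rfl⟩ := hx
  cases Option.mem_unique hb hb'
  exact hlb₂ ((hΔ l hl d hd (hlb₁.trans hxb₁.symm)).trans (by simpa using hxb₂))

theorem norm_conj_eq_of_norm_mul_eq_add {Δ W : FreeGroup α} (hW : W ≠ 1)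
    (hl : norm (Δ⁻¹ * W) = norm Δ⁻¹ + norm W) (hr : norm (W * Δ) = norm W + norm Δ) :
    norm (Δ⁻¹ * W * Δ) = norm W + 2 * norm Δ := by
  have hred : IsReduced ((Δ⁻¹ * W).toWord ++ Δ.toWord) := by
    rw [toWord_mul_of_norm_mul_eq_add hl]
    exact (norm_mul_eq_add_iff.1 hl).append_overlap (norm_mul_eq_add_iff.1 hr) (by simpa using hW)
  rw [norm_mul_eq_add_iff.2 hred, hl, norm_inv_eq]
  ring

theorem norm_le_norm_conj_of_norm_inv_mul {Δ W : FreeGroup α}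
    (h : norm (Δ⁻¹ * W) = norm Δ⁻¹ + norm W) : norm W ≤ norm (Δ⁻¹ * W * Δ) := by
  -- `W = p c` and `Δ = c⁻¹ s` with `W Δ = p s` reduced. If `p` is empty, all of `W` cancels and
  -- the triangle inequality suffices; otherwise `Δ⁻¹ p s` is reduced.
  obtain ⟨p, c, s, hW, hΔ, hWΔ⟩ := exists_toWord_mul W Δ
  have hlen : Δ.toWord.length = c.length + s.length := by simp [hΔ, invRev_length]
  by_cases hp : p = []
  · subst hp
    have hcancel : norm (W * Δ) + norm W = norm Δ := by simp [norm, hWΔ, hW, hlen, add_comm]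
    have := norm_mul_le (Δ⁻¹ * W * Δ) (W * Δ)⁻¹
    rw [norm_inv_eq, show Δ⁻¹ * W * Δ * (W * Δ)⁻¹ = Δ⁻¹ by group, norm_inv_eq] at this
    omega
  · rw [norm_mul_eq_add_iff, hW, ← List.append_assoc] at h
    have hred : IsReduced (Δ⁻¹.toWord ++ (W * Δ).toWord) := by
      rw [hWΔ, ← List.append_assoc]
      exact (h.infix ⟨[], c, by simp⟩).append_overlap (hWΔ ▸ isReduced_toWord) hp
    rw [mul_assoc, norm_mul_eq_add_iff.2 hred]
    simp only [List.length_append, toWord_inv, invRev_length, norm, hW, hlen, hWΔ]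
    omega

theorem norm_le_norm_conj_of_norm_mul {Δ W : FreeGroup α}
    (h : norm (W * Δ) = norm W + norm Δ) : norm W ≤ norm (Δ⁻¹ * W * Δ) := by
  have := norm_le_norm_conj_of_norm_inv_mul (Δ := Δ) (W := W⁻¹)
    (by rw [← mul_inv_rev, norm_inv_eq, h, norm_inv_eq, norm_inv_eq, add_comm])
  rwa [norm_inv_eq, show Δ⁻¹ * W⁻¹ * Δ = (Δ⁻¹ * W * Δ)⁻¹ by group, norm_inv_eq] at this

theorem two_mul_norm_le_of_norm_inv_mul {Δ W : FreeGroup α}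
    (hl : norm (Δ⁻¹ * W) = norm Δ⁻¹ + norm W)
    (hr : norm (W * Δ) = norm W + norm Δ ∨ norm (W * Δ⁻¹) = norm W + norm Δ⁻¹) :
    2 * norm W ≤ norm (Δ⁻¹ * W * Δ) + norm (Δ * W * Δ⁻¹) := by
  rcases eq_or_ne W 1 with rfl | hW
  · simp
  rcases hr with hr | hr
  · have hfull := norm_conj_eq_of_norm_mul_eq_add hW hl hr
    have hback := norm_conj_le Δ (Δ * W * Δ⁻¹)
    rw [show Δ⁻¹ * (Δ * W * Δ⁻¹) * Δ = W by group] at hback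
    omega
  · have hA := norm_le_norm_conj_of_norm_inv_mul hl
    have hB := norm_le_norm_conj_of_norm_mul hr
    rw [inv_inv] at hB
    omega

theorem two_mul_norm_le_norm_conj_add_norm_conj {Δ : FreeGroup α}
    (hΔ : norm (Δ * Δ) = 2 * norm Δ) (W : FreeGroup α) :
    2 * norm W ≤ norm (Δ⁻¹ * W * Δ) + norm (Δ * W * Δ⁻¹) := by
  have hr : norm (W * Δ) = norm W + norm Δ ∨ norm (W * Δ⁻¹) = norm W + norm Δ⁻¹ := by
    have := norm_inv_mul_eq_add_or_norm_mul_eq_add hΔ W⁻¹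
    rw [show Δ⁻¹ * W⁻¹ = (W * Δ)⁻¹ by group, show Δ * W⁻¹ = (W * Δ⁻¹)⁻¹ by group] at this
    simp only [norm_inv_eq] at this ⊢
    omega
  rcases norm_inv_mul_eq_add_or_norm_mul_eq_add hΔ W with hl | hl
  · exact two_mul_norm_le_of_norm_inv_mul hl hr
  · have := two_mul_norm_le_of_norm_inv_mul (Δ := Δ⁻¹) (by rwa [inv_inv])
      (by rwa [inv_inv, or_comm])
    rwa [inv_inv, add_comm] at this

end FreeGroup

section DiscreteConvexity

variable {α : Type*} [AddCommMonoid α] [PartialOrder α] [IsOrderedCancelAddMonoid α]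

theorem monotone_nat_of_discrete_convex {u : ℕ → α}
    (hconv : ∀ m, u (m + 1) + u (m + 1) ≤ u m + u (m + 2)) (h₀ : u 0 ≤ u 1) : Monotone u := by
  refine monotone_nat_of_le_succ fun m => ?_
  induction m with
  | zero => exact h₀
  | succ m ih => exact le_of_add_le_add_left ((hconv m).trans (add_le_add_left ih _))

theorem apply_zero_le_of_discrete_convex {f : ℤ → α}
    (hconv : ∀ k, f k + f k ≤ f (k - 1) + f (k + 1)) (h₁ : f 0 ≤ f 1) (hneg : f 0 ≤ f (-1)) :
    ∀ k, f 0 ≤ f k := by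
  have hnat : ∀ g : ℤ → α, (∀ k, g k + g k ≤ g (k - 1) + g (k + 1)) → g 0 ≤ g 1 →
      ∀ m : ℕ, g 0 ≤ g m := fun g hg h m =>
    monotone_nat_of_discrete_convex (u := fun m : ℕ => g m)
      (fun m => by simpa [add_assoc] using hg (m + 1)) (by simpa using h) m.zero_le
  intro k
  obtain ⟨m, rfl | rfl⟩ := Int.eq_nat_or_neg k
  · exact hnat f hconv h₁ m
  · refine hnat (fun k => f (-k)) (fun k => ?_) (by simpa using hneg) m
    have := hconv (-k)
    rw [show -k - 1 = -(k + 1) by ring, show -k + 1 = -(k - 1) by ring] at this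
    exact this.trans_eq (add_comm _ _)

end DiscreteConvexity

theorem stmt_11_general (n : ℕ) (Δ V : FreeGroup (Fin n))
    (hcyc : FreeGroup.norm (Δ * Δ) = 2 * FreeGroup.norm Δ)
    (h1 : FreeGroup.norm V ≤ FreeGroup.norm (Δ⁻¹ * V * Δ))
    (h2 : FreeGroup.norm V ≤ FreeGroup.norm (Δ * V * Δ⁻¹)) :
    ∀ k : ℤ, FreeGroup.norm V ≤ FreeGroup.norm (Δ ^ (-k) * V * Δ ^ k) := by
  set f : ℤ → ℕ := fun k => FreeGroup.norm (Δ ^ (-k) * V * Δ ^ k)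
  have hconv : ∀ k, f k + f k ≤ f (k - 1) + f (k + 1) := fun k => by
    have := FreeGroup.two_mul_norm_le_norm_conj_add_norm_conj hcyc (Δ ^ (-k) * V * Δ ^ k)
    rw [two_mul, show Δ⁻¹ * (Δ ^ (-k) * V * Δ ^ k) * Δ = Δ ^ (-(k + 1)) * V * Δ ^ (k + 1) by group,
      show Δ * (Δ ^ (-k) * V * Δ ^ k) * Δ⁻¹ = Δ ^ (-(k - 1)) * V * Δ ^ (k - 1) by group] at this
    exact this.trans_eq (add_comm _ _)
  have hmin := apply_zero_le_of_discrete_convex hconv (by simpa [f] using h1) (by simpa [f] using h2)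
  simpa [f] using hmin

theorem stmt_11 (n : ℕ) (hn : 2 ≤ n) (Δ V : FreeGroup (Fin n))
    (hcyc : FreeGroup.norm (Δ * Δ) = 2 * FreeGroup.norm Δ)
    (h1 : FreeGroup.norm V ≤ FreeGroup.norm (Δ⁻¹ * V * Δ))
    (h2 : FreeGroup.norm V ≤ FreeGroup.norm (Δ * V * Δ⁻¹)) :
    ∀ k : ℤ, FreeGroup.norm V ≤ FreeGroup.norm (Δ ^ (-k) * V * Δ ^ k) :=
  stmt_11_general n Δ V hcyc h1 h2
end

section
/- Let F_{2n} be the free group on z_0, …, z_{2n−1} (n ≥ 1) and ψ the automorphism with ψ(z_0) = z_0 z_2 ⋯ z_{2n−2} z_{2n−1}⁻¹ z_{2n−3}⁻¹ ⋯ z_3⁻¹ z_1⁻¹ and ψ(z_i) = z_{i−1} for 1 ≤ i ≤ 2n−1. Then the element Σ = z_0 z_2 ⋯ z_{2n−2} (z_0 z_1 ⋯ z_{2n−1})⁻¹ z_1 z_3 ⋯ z_{2n−1} satisfies ψ(Σ) = Σ. -/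
/-!
Write `E`, `O`, `A` for the even, odd and full products and `L = z_{2n-1}`. Since `ψ` lowers
every index `≥ 1` by one, `ψ O = E`, `ψ E = ψ(z_0) · O L⁻¹` and `ψ A = ψ(z_0) · A L⁻¹`. Substituting
`ψ(z_0) = E O⁻¹` gives `ψ(E A⁻¹ O) = E O⁻¹ · O L⁻¹ · L A⁻¹ · O E⁻¹ · E = E A⁻¹ O`.
-/

/-- The product of even-indexed generators `z_0 z_2 ⋯ z_{2n-2}`. -/
def evenProd (n : ℕ) : FreeGroup (Fin (2 * n)) :=
  ((List.finRange n).map (fun j => FreeGroup.of ⟨2 * (j : ℕ), by have := j.isLt; omega⟩)).prod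

/-- The product of odd-indexed generators `z_1 z_3 ⋯ z_{2n-1}`. -/
def oddProd (n : ℕ) : FreeGroup (Fin (2 * n)) :=
  ((List.finRange n).map
    (fun j => FreeGroup.of ⟨2 * (j : ℕ) + 1, by have := j.isLt; omega⟩)).prod

/-- The full product `z_0 z_1 ⋯ z_{2n-1}`. -/
def allProd (n : ℕ) : FreeGroup (Fin (2 * n)) :=
  ((List.finRange (2 * n)).map FreeGroup.of).prod

/-- `Σ = z_0 z_2 ⋯ z_{2n-2} (z_0 z_1 ⋯ z_{2n-1})⁻¹ z_1 z_3 ⋯ z_{2n-1}`. -/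
def SigmaProd (n : ℕ) : FreeGroup (Fin (2 * n)) :=
  evenProd n * (allProd n)⁻¹ * oddProd n

section ShiftedProducts

variable {M : Type*} [Monoid M]

def evenProdOf (x : ℕ → M) (n : ℕ) : M :=
  ((List.range n).map fun j => x (2 * j)).prod

def oddProdOf (x : ℕ → M) (n : ℕ) : M :=
  ((List.range n).map fun j => x (2 * j + 1)).prod

def allProdOf (x : ℕ → M) (n : ℕ) : M :=
  ((List.range (2 * n)).map x).prod

lemma map_prod_range_shift (ψ : M →* M) (x : ℕ → M) (f : ℕ → ℕ) {k : ℕ}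
    (h : ∀ j < k, ψ (x (f j + 1)) = x (f j)) :
    ψ ((List.range k).map fun j => x (f j + 1)).prod =
      ((List.range k).map fun j => x (f j)).prod := by
  rw [map_list_prod, List.map_map]
  exact congrArg List.prod (List.map_congr_left fun j hj => h j (List.mem_range.mp hj))

variable (ψ : M →* M) (x : ℕ → M) (n : ℕ)

lemma map_oddProdOf (hx : ∀ i, i + 1 < 2 * n → ψ (x (i + 1)) = x i) :
    ψ (oddProdOf x n) = evenProdOf x n :=
  map_prod_range_shift ψ x (2 * ·) fun j hj => hx _ (by omega)

lemma map_evenProdOf_succ (hx : ∀ i, i + 1 < 2 * (n + 1) → ψ (x (i + 1)) = x i) :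
    ψ (evenProdOf x (n + 1)) = ψ (x 0) * ((List.range n).map fun j => x (2 * j + 1)).prod := by
  rw [evenProdOf, List.prod_range_succ', map_mul]
  exact congrArg _ (map_prod_range_shift ψ x (2 * · + 1) fun j hj => hx _ (by omega))

lemma map_allProdOf_succ (hx : ∀ i, i + 1 < 2 * (n + 1) → ψ (x (i + 1)) = x i) :
    ψ (allProdOf x (n + 1)) = ψ (x 0) * ((List.range (2 * n + 1)).map x).prod := by
  rw [allProdOf, Nat.mul_succ, List.prod_range_succ', map_mul]
  exact congrArg _ (map_prod_range_shift ψ x id fun i hi => hx i (by omega))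

lemma oddProdOf_succ :
    oddProdOf x (n + 1) = ((List.range n).map fun j => x (2 * j + 1)).prod * x (2 * n + 1) :=
  List.prod_range_succ _ n

lemma allProdOf_succ :
    allProdOf x (n + 1) = ((List.range (2 * n + 1)).map x).prod * x (2 * n + 1) :=
  List.prod_range_succ x (2 * n + 1)

end ShiftedProducts

def sigmaProdOf {G : Type*} [Group G] (x : ℕ → G) (n : ℕ) : G :=
  evenProdOf x n * (allProdOf x n)⁻¹ * oddProdOf x n

theorem map_sigmaProdOf_succ {G : Type*} [Group G] (ψ : G →* G) (x : ℕ → G) (n : ℕ)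
    (hx : ∀ i, i + 1 < 2 * (n + 1) → ψ (x (i + 1)) = x i)
    (h0 : ψ (x 0) = evenProdOf x (n + 1) * (oddProdOf x (n + 1))⁻¹) :
    ψ (sigmaProdOf x (n + 1)) = sigmaProdOf x (n + 1) := by
  rw [sigmaProdOf, map_mul, map_mul, map_inv, map_evenProdOf_succ ψ x n hx,
    map_allProdOf_succ ψ x n hx, map_oddProdOf ψ x (n + 1) hx, h0, oddProdOf_succ,
    allProdOf_succ]
  group

-- Generators indexed by `ℕ`, so that the products can run over `List.range`; indices `≥ m`
-- give the junk value `1`.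
def natGen (m i : ℕ) : FreeGroup (Fin m) :=
  if h : i < m then FreeGroup.of ⟨i, h⟩ else 1

lemma natGen_of_lt {m i : ℕ} (h : i < m) : natGen m i = FreeGroup.of ⟨i, h⟩ :=
  dif_pos h

lemma finRange_map_of_eq_range_map_natGen {m k : ℕ} (f : ℕ → ℕ) (hf : ∀ j < k, f j < m) :
    ((List.finRange k).map fun j => FreeGroup.of ⟨f j, hf j j.isLt⟩) =
      (List.range k).map (natGen m ∘ f) := by
  rw [← List.map_coe_finRange_eq_range, List.map_map]
  exact List.map_congr_left fun j _ => (natGen_of_lt _).symm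

lemma evenProd_eq_evenProdOf (n : ℕ) : evenProd n = evenProdOf (natGen (2 * n)) n :=
  congrArg List.prod (finRange_map_of_eq_range_map_natGen (2 * ·) fun _ _ => by omega)

lemma oddProd_eq_oddProdOf (n : ℕ) : oddProd n = oddProdOf (natGen (2 * n)) n :=
  congrArg List.prod (finRange_map_of_eq_range_map_natGen (2 * · + 1) fun _ _ => by omega)

lemma allProd_eq_allProdOf (n : ℕ) : allProd n = allProdOf (natGen (2 * n)) n :=
  congrArg List.prod (finRange_map_of_eq_range_map_natGen id fun _ h => h)

theorem stmt_18 (n : ℕ) (hn : 1 ≤ n)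
    (ψ : FreeGroup (Fin (2 * n)) →* FreeGroup (Fin (2 * n)))
    (h0 : ψ (FreeGroup.of ⟨0, by omega⟩) = evenProd n * (oddProd n)⁻¹)
    (hi : ∀ i : Fin (2 * n), 0 < (i : ℕ) →
      ψ (FreeGroup.of i) =
        FreeGroup.of ⟨(i : ℕ) - 1, lt_of_le_of_lt (Nat.sub_le _ _) i.isLt⟩) :
    ψ (SigmaProd n) = SigmaProd n := by
  obtain ⟨m, rfl⟩ : ∃ m, n = m + 1 := ⟨n - 1, by omega⟩
  have hshift : ∀ i, i + 1 < 2 * (m + 1) → ψ (natGen _ (i + 1)) = natGen _ i := fun i h => by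
    rw [natGen_of_lt (by omega), natGen_of_lt (by omega), hi _ (Nat.succ_pos i)]
    rfl
  have hsigma : SigmaProd (m + 1) = sigmaProdOf (natGen _) (m + 1) := by
    rw [SigmaProd, sigmaProdOf, evenProd_eq_evenProdOf, allProd_eq_allProdOf,
      oddProd_eq_oddProdOf]
  rw [hsigma]
  refine map_sigmaProdOf_succ ψ _ m hshift ?_
  rw [← evenProd_eq_evenProdOf, ← oddProd_eq_oddProdOf, natGen_of_lt (by omega)]
  exact h0
end
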